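/- With δ := ω·(α - σ(α)), one has δ + σ(δ) = algebraMap K R (ε(1)) · δ · σ(δ). -/

import Mathlib

/-!
Write `ω = a + bα` and `d = α - σα`, so that `σd = -d`. Then `δ + σδ = (ω - σω)d = b·d²` and
`δ·σδ = -N(ω)·d²` with `N(ω) = ω·σω = a² + abs + b²p`. The two conditions on `ε` are a linear
system for `(ε 1, ε α)` with determinant `N(ω)`, and Cramer's rule gives `ε(1)·N(ω) = -b`
without inverting anything.
-/

open Polynomial TensorProduct

noncomputable section

variable {K : Type*} [CommRing K]

/-- The quadratic `K`-algebra `K[X]/(X² - s·X + p)`. -/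
abbrev Quad (s p : K) : Type _ := AdjoinRoot (X ^ 2 - C s * X + C p)

/-- The image of `X`, i.e. the generator `α`. -/
def qα (s p : K) : Quad s p := AdjoinRoot.root _

lemma quad_aeval_root (s p : K) :
    (aeval (qα s p)) (X ^ 2 - C s * X + C p) = 0 := by
  simp [qα, AdjoinRoot.aeval_eq, AdjoinRoot.mk_self]

/-- The involution `σ` of the quadratic algebra, with `σ α = s - α`. -/
def qσ (s p : K) : Quad s p →ₐ[K] Quad s p :=
  AdjoinRoot.liftAlgHom _ (Algebra.ofId K (Quad s p)) (algebraMap K (Quad s p) s - qα s p) (by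
    have h0 : (aeval (algebraMap K (Quad s p) s - qα s p)) (X ^ 2 - C s * X + C p) = 0 := by
      have h := quad_aeval_root s p
      simp only [map_add, map_sub, map_mul, map_pow, aeval_X, aeval_C] at h ⊢
      linear_combination h
    exact h0)

section

variable {R : Type*} [CommRing R] [Algebra K R] {s p : K} {α : R}

lemma sq_eq_of_aeval_eq_zero (hα : aeval α (X ^ 2 - C s * X + C p) = 0) :
    α ^ 2 = algebraMap K R s * α - algebraMap K R p := by
  simp only [map_add, map_sub, map_mul, map_pow, aeval_X, aeval_C] at hα
  linear_combination hα

lemma map_one_mul_norm_eq_neg (hα : aeval α (X ^ 2 - C s * X + C p) = 0) (ε : R →ₗ[K] K)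
    {ω : R} {a b : K} (hω : ω = algebraMap K R a + algebraMap K R b * α)
    (h₀ : ε ω = 0) (h₁ : ε (ω * α) = 1) :
    ε 1 * (a ^ 2 + a * b * s + b ^ 2 * p) = -b := by
  have hω' : ω = a • 1 + b • α := by rw [hω, Algebra.smul_def, Algebra.smul_def, mul_one]
  have hωα : ω * α = (-(b * p)) • 1 + (a + b * s) • α := by
    simp only [hω, Algebra.smul_def, mul_one, map_neg, map_mul, map_add]
    linear_combination algebraMap K R b * sq_eq_of_aeval_eq_zero hα
  rw [hω', map_add, map_smul, map_smul, smul_eq_mul, smul_eq_mul] at h₀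
  rw [hωα, map_add, map_smul, map_smul, smul_eq_mul, smul_eq_mul] at h₁
  linear_combination (a + b * s) * h₀ - b * h₁

lemma mul_conj_eq_algebraMap (hα : aeval α (X ^ 2 - C s * X + C p) = 0)
    (σ : R →ₐ[K] R) (hσ : σ α = algebraMap K R s - α)
    {ω : R} {a b : K} (hω : ω = algebraMap K R a + algebraMap K R b * α) :
    ω * σ ω = algebraMap K R (a ^ 2 + a * b * s + b ^ 2 * p) := by
  simp only [hω, map_add, map_mul, AlgHom.commutes, hσ, map_pow]
  linear_combination -algebraMap K R b ^ 2 * sq_eq_of_aeval_eq_zero hα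

theorem add_conj_eq_algebraMap_map_one_mul_mul_conj
    (hα : aeval α (X ^ 2 - C s * X + C p) = 0)
    (σ : R →ₐ[K] R) (hσ : σ α = algebraMap K R s - α) (ε : R →ₗ[K] K)
    {ω : R} {a b : K} (hω : ω = algebraMap K R a + algebraMap K R b * α)
    (h₀ : ε ω = 0) (h₁ : ε (ω * α) = 1) :
    ω * (α - σ α) + σ (ω * (α - σ α)) =
      algebraMap K R (ε 1) * (ω * (α - σ α)) * σ (ω * (α - σ α)) := by
  have hσσ : σ (σ α) = α := by rw [hσ, map_sub, AlgHom.commutes, hσ, sub_sub_cancel]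
  have hnorm := congrArg (algebraMap K R) (map_one_mul_norm_eq_neg hα ε hω h₀ h₁)
  rw [map_mul, map_neg, ← mul_conj_eq_algebraMap hα σ hσ hω] at hnorm
  have hsub : ω - σ ω = algebraMap K R b * (α - σ α) := by
    simp only [hω, map_add, map_mul, AlgHom.commutes]; ring
  rw [map_mul, map_sub, hσσ]
  linear_combination (α - σ α) * hsub + (α - σ α) ^ 2 * hnorm

end

lemma Quad.exists_eq_algebraMap_add_algebraMap_mul_qα (s p : K) (z : Quad s p) :
    ∃ a b : K, z = algebraMap K (Quad s p) a + algebraMap K (Quad s p) b * qα s p := by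
  rcases subsingleton_or_nontrivial (Quad s p) with _ | _
  · exact ⟨0, 0, Subsingleton.elim _ _⟩
  have := (algebraMap K (Quad s p)).domain_nontrivial
  have hg : (X ^ 2 - C s * X + C p).Monic := by monicity!
  obtain ⟨f, hf, rfl⟩ := (AdjoinRoot.powerBasis' hg).exists_eq_aeval z
  have hdeg : f.natDegree ≤ 1 := by
    have : (X ^ 2 - C s * X + C p).natDegree = 2 := by compute_degree!
    rw [AdjoinRoot.powerBasis'_dim, this] at hf
    omega
  refine ⟨f.coeff 0, f.coeff 1, ?_⟩
  conv_lhs => rw [eq_X_add_C_of_natDegree_le_one hdeg]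
  simp only [map_add, map_mul, aeval_X, aeval_C, AdjoinRoot.powerBasis'_gen, qα]
  ring

lemma qσ_qα (s p : K) : qσ s p (qα s p) = algebraMap K (Quad s p) s - qα s p := by
  simp [qσ, qα, AdjoinRoot.liftAlgHom_root]

/-- With `δ = ω·(α - σ α)`, one has `δ + σ δ = ε(1)·δ·σ(δ)`. -/
theorem stmt5 (s p : K) (ω : (Quad s p)ˣ) (ε : Quad s p →ₗ[K] K)
    (hω : ε (ω : Quad s p) = 0) (hωα : ε ((ω : Quad s p) * qα s p) = 1) :
    (ω : Quad s p) * (qα s p - qσ s p (qα s p))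
        + qσ s p ((ω : Quad s p) * (qα s p - qσ s p (qα s p)))
      = algebraMap K (Quad s p) (ε 1) *
          ((ω : Quad s p) * (qα s p - qσ s p (qα s p))) *
          qσ s p ((ω : Quad s p) * (qα s p - qσ s p (qα s p))) := by
  obtain ⟨a, b, hab⟩ := Quad.exists_eq_algebraMap_add_algebraMap_mul_qα s p ω
  exact add_conj_eq_algebraMap_map_one_mul_mul_conj (quad_aeval_root s p) (qσ s p) (qσ_qα s p)
    ε hab hω hωα

end
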